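/- Let $(\mathcal{A},[~,~],N)$ be an $S$-adjoint-admissible Nijenhuis mock-Lie algebra, $r\in\mathcal{A}\otimes\mathcal{A}$, and $\Delta(x)=[x,r^1]\otimes r^2 - r^1\otimes[x,r^2]$. Then the Nijenhuis coalgebra condition $(S\otimes S)\Delta(x)+\Delta(S^2(x)) = (S\otimes\mathrm{id})\Delta(S(x))+(\mathrm{id}\otimes S)\Delta(S(x))$ holds for all $x$ if and only if $(\mathrm{id}\otimes \mathrm{ad}(S(x)) - \mathrm{id}\otimes S\circ\mathrm{ad}(x))(S\otimes\mathrm{id}-\mathrm{id}\otimes N)(r) + (\mathrm{ad}(S(x))\otimes\mathrm{id} - S\circ\mathrm{ad}(x)\otimes\mathrm{id})(N\otimes\mathrm{id}-\mathrm{id}\otimes S)(r) = 0$ for all $x\in\mathcal{A}$. -/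

import Mathlib

open TensorProduct LinearMap

/-- `Δ(x) = [x, r¹] ⊗ r² - r¹ ⊗ [x, r²]` for an element `r ∈ A ⊗ A`. -/
noncomputable def DeltaOf {K A : Type*} [Field K] [AddCommGroup A] [Module K A]
    (b : A →ₗ[K] A →ₗ[K] A) (r : A ⊗[K] A) (x : A) : A ⊗[K] A :=
  rTensor A (b x) r - lTensor A (b x) r

/-- For an `S`-adjoint-admissible Nijenhuis mock-Lie algebra and `Δ = Δ_r`, the Nijenhuis
coalgebra identity `(S⊗S)Δ + Δ∘S² = (S⊗id)Δ∘S + (id⊗S)Δ∘S` holds iff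
`(id⊗ad(Sx) - id⊗S∘ad x)(S⊗id - id⊗N)(r) + (ad(Sx)⊗id - S∘ad x⊗id)(N⊗id - id⊗S)(r) = 0`
for all `x`. -/
theorem stmt17 {K A : Type*} [Field K] [CharZero K]
    [AddCommGroup A] [Module K A]
    (b : A →ₗ[K] A →ₗ[K] A) (N S : A →ₗ[K] A) (r : A ⊗[K] A)
    (hcomm : ∀ x y : A, b x y = b y x)
    (hjac : ∀ x y z : A, b x (b y z) + b y (b z x) + b z (b x y) = 0)
    (hN : ∀ x y : A, b (N x) (N y) + N (N (b x y)) = N (b (N x) y) + N (b x (N y)))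
    (hadm : ∀ x y : A,
      S (b (N x) y) + b x (S (S y)) = b (N x) (S y) + S (b x (S y))) :
    (∀ x : A,
      TensorProduct.map S S (DeltaOf b r x) + DeltaOf b r (S (S x)) =
        rTensor A S (DeltaOf b r (S x)) + lTensor A S (DeltaOf b r (S x))) ↔
    (∀ x : A,
      (lTensor A (b (S x)) - lTensor A (S ∘ₗ b x))
          ((rTensor A S - lTensor A N) r) +
        (rTensor A (b (S x)) - rTensor A (S ∘ₗ b x))
          ((rTensor A N - lTensor A S) r) = 0) := by
  have key : ∀ x a : A, b (S (S x)) a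
      = S (b (S x) a) + b (S x) (N a) - S (b x (N a)) := by
    intro x a
    have h := hadm a x
    rw [hcomm (N a) x, hcomm a (S (S x)), hcomm (N a) (S x), hcomm a (S x)] at h
    rw [eq_sub_iff_add_eq, add_comm (b (S (S x)) a), h, add_comm]
  have main : ∀ x : A,
      TensorProduct.map S S (DeltaOf b r x) + DeltaOf b r (S (S x)) -
        (rTensor A S (DeltaOf b r (S x)) + lTensor A S (DeltaOf b r (S x))) =
      (lTensor A (b (S x)) - lTensor A (S ∘ₗ b x))
          ((rTensor A S - lTensor A N) r) +
        (rTensor A (b (S x)) - rTensor A (S ∘ₗ b x))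
          ((rTensor A N - lTensor A S) r) := by
    intro x
    induction r using TensorProduct.induction_on with
    | zero => simp [DeltaOf]
    | tmul a c =>
        simp only [DeltaOf, rTensor_tmul, lTensor_tmul, map_tmul, map_sub, LinearMap.sub_apply,
          coe_comp, Function.comp_apply, tmul_sub, sub_tmul]
        rw [key x a, key x c]
        simp only [tmul_sub, sub_tmul, tmul_add, add_tmul]
        abel
    | add u v hu hv =>
        have h2 := congrArg₂ (· + ·) hu hv
        simp only [DeltaOf, map_add, map_sub] at h2 ⊢
        abel_nf at h2 ⊢
        exact h2
  constructor
  · intro h x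
    rw [← main x, h x, sub_self]
  · intro h x
    have := main x
    rw [h x, sub_eq_zero] at this
    exact this
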